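/- Let u₀ be C¹ with inf u₀' < 0 and y ↦ y + t u₀(y) proper. Define t_c := −1/inf_{y} u₀'(y) > 0. Then for 0 < t < t_c the map y ↦ y + t u₀(y) is strictly increasing (hence injective), and for every t > t_c there exist x with at least three distinct solutions y of x = y + t u₀(y), provided the infimum of u₀' is attained at a point where u₀' is not locally constant at its minimum (e.g., u₀''' > 0 at the minimizer of u₀'). -/

import Mathlib

/-!
For `t < t_c` the derivative `1 + t u₀'` of the characteristic map is bounded below by
`1 + t u₀'(y*) > 0`. For `t > t_c` it is negative at `y*`, so the map decreases somewhere,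
while, being a bounded perturbation of the identity, it tends to `±∞` at `±∞`: a value taken
strictly between `f b < f a` (with `a < b`) is then hit once on each of `(-∞, a)`, `(a, b)`
and `(b, ∞)` by the intermediate value theorem.
-/

open Filter Set

lemma tendsto_add_atTop_of_abs_le {g : ℝ → ℝ} {C : ℝ} (hg : ∀ y, |g y| ≤ C) :
    Tendsto (fun y => y + g y) atTop atTop :=
  tendsto_atTop_add_right_of_le _ (-C) tendsto_id fun y => neg_le_of_abs_le (hg y)

lemma tendsto_add_atBot_of_abs_le {g : ℝ → ℝ} {C : ℝ} (hg : ∀ y, |g y| ≤ C) :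
    Tendsto (fun y => y + g y) atBot atBot :=
  tendsto_atBot_add_right_of_ge _ C tendsto_id fun y => le_of_abs_le (hg y)

lemma exists_lt_and_apply_lt_of_deriv_neg {f : ℝ → ℝ} {x : ℝ} (h : deriv f x < 0) :
    ∃ a b, a < b ∧ f b < f a := by
  by_contra! hmono
  exact h.not_ge (monotone_iff_forall_lt.mpr hmono).deriv_nonneg

lemma exists_three_preimages {f : ℝ → ℝ} (hf : Continuous f)
    (hbot : Tendsto f atBot atBot) (htop : Tendsto f atTop atTop)
    {a b : ℝ} (hab : a < b) (hfab : f b < f a) :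
    ∃ x y₁ y₂ y₃, y₁ < y₂ ∧ y₂ < y₃ ∧ f y₁ = x ∧ f y₂ = x ∧ f y₃ = x := by
  obtain ⟨x, hbx, hxa⟩ := exists_between hfab
  obtain ⟨M, hfM, hMa⟩ :=
    ((hbot.eventually (eventually_lt_atBot x)).and (eventually_le_atBot a)).exists
  obtain ⟨N, hfN, hbN⟩ :=
    ((htop.eventually (eventually_gt_atTop x)).and (eventually_ge_atTop b)).exists
  obtain ⟨y₁, ⟨-, hy₁a⟩, hy₁⟩ := intermediate_value_Ioo hMa hf.continuousOn ⟨hfM, hxa⟩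
  obtain ⟨y₂, ⟨hay₂, hy₂b⟩, hy₂⟩ := intermediate_value_Ioo' hab.le hf.continuousOn ⟨hbx, hxa⟩
  obtain ⟨y₃, ⟨hby₃, -⟩, hy₃⟩ := intermediate_value_Ioo hbN hf.continuousOn ⟨hbx, hfN⟩
  exact ⟨x, y₁, y₂, y₃, hy₁a.trans hay₂, hy₂b.trans hby₃, hy₁, hy₂, hy₃⟩

lemma deriv_add_const_mul {u : ℝ → ℝ} {y : ℝ} (t : ℝ) (hu : DifferentiableAt ℝ u y) :
    deriv (fun z => z + t * u z) y = 1 + t * deriv u y :=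
  ((hasDerivAt_id y).add (hu.hasDerivAt.const_mul t)).deriv

lemma strictMono_add_const_mul {u : ℝ → ℝ} {m t : ℝ} (hu : Differentiable ℝ u)
    (hm : ∀ y, m ≤ deriv u y) (ht : 0 ≤ t) (htm : 0 < 1 + t * m) :
    StrictMono (fun y => y + t * u y) :=
  strictMono_of_deriv_pos fun y => by
    rw [deriv_add_const_mul t (hu y)]
    linarith [mul_le_mul_of_nonneg_left (hm y) ht]

theorem breaking_time_characteristics_general (u₀ : ℝ → ℝ) (hu₀ : ContDiff ℝ 3 u₀)
    (hbdd : ∃ Cb : ℝ, ∀ y : ℝ, |u₀ y| ≤ Cb)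
    (ystar : ℝ)
    (hmin : ∀ y : ℝ, deriv u₀ ystar ≤ deriv u₀ y)
    (hneg : deriv u₀ ystar < 0) :
    (0 < -1 / deriv u₀ ystar) ∧
    (∀ t : ℝ, 0 < t → t < -1 / deriv u₀ ystar →
      StrictMono (fun y => y + t * u₀ y)) ∧
    (∀ t : ℝ, -1 / deriv u₀ ystar < t →
      ∃ x y₁ y₂ y₃ : ℝ, y₁ ≠ y₂ ∧ y₁ ≠ y₃ ∧ y₂ ≠ y₃ ∧
        x = y₁ + t * u₀ y₁ ∧ x = y₂ + t * u₀ y₂ ∧ x = y₃ + t * u₀ y₃) := by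
  have hd : Differentiable ℝ u₀ := hu₀.differentiable (by norm_num)
  have htc : 0 < -1 / deriv u₀ ystar := div_pos_of_neg_of_neg (by norm_num) hneg
  refine ⟨htc, fun t ht htlt => ?_, fun t ht => ?_⟩
  · have : -1 < t * deriv u₀ ystar := (lt_div_iff_of_neg hneg).mp htlt
    exact strictMono_add_const_mul hd hmin ht.le (by linarith)
  · have hbreak : t * deriv u₀ ystar < -1 := (div_lt_iff_of_neg hneg).mp ht
    obtain ⟨Cb, hCb⟩ := hbdd
    have htu : ∀ y, |t * u₀ y| ≤ |t| * Cb := fun y => by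
      rw [abs_mul]; exact mul_le_mul_of_nonneg_left (hCb y) (abs_nonneg t)
    obtain ⟨a, b, hab, hfab⟩ := exists_lt_and_apply_lt_of_deriv_neg
      (f := fun y => y + t * u₀ y) (x := ystar)
      (by rw [deriv_add_const_mul t (hd ystar)]; linarith)
    obtain ⟨x, y₁, y₂, y₃, h₁₂, h₂₃, hy₁, hy₂, hy₃⟩ := exists_three_preimages
      (by fun_prop) (tendsto_add_atBot_of_abs_le htu) (tendsto_add_atTop_of_abs_le htu) hab hfab
    exact ⟨x, y₁, y₂, y₃, h₁₂.ne, (h₁₂.trans h₂₃).ne, h₂₃.ne, hy₁.symm, hy₂.symm, hy₃.symm⟩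

/-- let `u₀` be `C³` and bounded, with `u₀'` attaining a negative minimum
at the unique point `y*`, and `u₀'''(y*) > 0`.  Set `t_c := −1/u₀'(y*) > 0`.  Then for
`0 < t < t_c` the characteristic map `y ↦ y + t u₀(y)` is strictly increasing (hence
injective), while for every `t > t_c` there is an `x` with at least three distinct
solutions `y` of `x = y + t u₀(y)`. -/
theorem breaking_time_characteristics (u₀ : ℝ → ℝ) (hu₀ : ContDiff ℝ 3 u₀)
    (hbdd : ∃ Cb : ℝ, ∀ y : ℝ, |u₀ y| ≤ Cb)
    (ystar : ℝ)
    (hmin : ∀ y : ℝ, deriv u₀ ystar ≤ deriv u₀ y)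
    (huniq : ∀ y : ℝ, deriv u₀ y = deriv u₀ ystar → y = ystar)
    (hneg : deriv u₀ ystar < 0)
    (h3 : 0 < deriv (deriv (deriv u₀)) ystar) :
    (0 < -1 / deriv u₀ ystar) ∧
    (∀ t : ℝ, 0 < t → t < -1 / deriv u₀ ystar →
      StrictMono (fun y => y + t * u₀ y)) ∧
    (∀ t : ℝ, -1 / deriv u₀ ystar < t →
      ∃ x y₁ y₂ y₃ : ℝ, y₁ ≠ y₂ ∧ y₁ ≠ y₃ ∧ y₂ ≠ y₃ ∧
        x = y₁ + t * u₀ y₁ ∧ x = y₂ + t * u₀ y₂ ∧ x = y₃ + t * u₀ y₃) :=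
  breaking_time_characteristics_general u₀ hu₀ hbdd ystar hmin hneg
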